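/- arXiv:2201.06385 — 4 statements merged into one kernel-verified Lean document; each statement's English description precedes it below -/
import Mathlib

section
/- For a connected weighted graph, the effective resistance defines a metric on the node set: for all nodes i, j, k one has ω_ij ≥ 0 with ω_ij = 0 if and only if i = j, ω_ij = ω_ji, and the triangle inequality ω_ik ≤ ω_ij + ω_jk holds. -/
open Matrix

variable {V : Type*}

/- The weighted Laplacian matrix of a weighted graph `(V, G, c)`:
`Q i i = ∑_{k ∼ i} c i k`, `Q i j = -c i j` for links `i ∼ j`, and `0` otherwise. -/
open Classical in
noncomputable def lapMatrix [Fintype V] (G : SimpleGraph V) (c : V → V → ℝ) :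
    Matrix V V ℝ :=
  Matrix.of fun i j =>
    if i = j then ∑ k, if G.Adj i k then c i k else 0
    else if G.Adj i j then -c i j else 0

/- The four Penrose equations characterizing the Moore–Penrose pseudoinverse. -/
def IsMoorePenroseInv [Fintype V] (Q Qd : Matrix V V ℝ) : Prop :=
  Q * Qd * Q = Q ∧ Qd * Q * Qd = Qd ∧ (Q * Qd)ᵀ = Q * Qd ∧ (Qd * Q)ᵀ = Qd * Q

/- The effective resistance `ω i j = (e_i - e_j)ᵀ Q† (e_i - e_j)`, computed from a
pseudoinverse `Qd` of the Laplacian. -/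
open Classical in
noncomputable def effRes [Fintype V] (Qd : Matrix V V ℝ) (i j : V) : ℝ :=
  (Pi.single i 1 - Pi.single j 1) ⬝ᵥ Qd *ᵥ (Pi.single i 1 - Pi.single j 1)

section
variable [Fintype V] [DecidableEq V] (G : SimpleGraph V) [DecidableRel G.Adj]
  (c : V → V → ℝ)

lemma lap_mulVec (x : V → ℝ) (i : V) :
    (lapMatrix G c *ᵥ x) i = ∑ j, (if G.Adj i j then c i j else 0) * (x i - x j) := by
  classical
  have hii : (if G.Adj i i then c i i else 0) = 0 := by simp
  have : ∀ j, (lapMatrix G c) i j * x j =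
      (if i = j then (∑ k, if G.Adj i k then c i k else 0) * x j else 0)
      - (if G.Adj i j then c i j else 0) * x j := by
    intro j
    by_cases h : i = j
    · subst h; simp [lapMatrix, hii]
      exact Or.inl (by congr!)
    · simp [lapMatrix, h]
      by_cases hadj : G.Adj i j <;> simp [hadj]
  simp only [mulVec, dotProduct, this, Finset.sum_sub_distrib, Finset.sum_ite_eq,
    Finset.mem_univ, if_true]
  rw [Finset.sum_mul]
  rw [← Finset.sum_sub_distrib]
  congr 1; ext j; ring

lemma lap_symm_entry (hsymm : ∀ i j, c i j = c j i) :
    (lapMatrix G c)ᵀ = lapMatrix G c := by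
  ext i j
  simp only [transpose_apply, lapMatrix, of_apply]
  by_cases h : i = j
  · subst h; rfl
  · rw [if_neg h, if_neg (Ne.symm h)]
    by_cases hadj : G.Adj i j
    · rw [if_pos hadj, if_pos (G.adj_symm hadj), hsymm i j]
    · rw [if_neg hadj, if_neg (fun h' => hadj (G.adj_symm h'))]

end

section
variable [Fintype V] [DecidableEq V] (G : SimpleGraph V) [DecidableRel G.Adj]
  (c : V → V → ℝ)

lemma lap_quad (hsymm : ∀ i j, c i j = c j i) (x : V → ℝ) :
    x ⬝ᵥ (lapMatrix G c *ᵥ x) * 2 =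
      ∑ i, ∑ j, (if G.Adj i j then c i j else 0) * (x i - x j) ^ 2 := by
  have h1 : x ⬝ᵥ (lapMatrix G c *ᵥ x) =
      ∑ i, ∑ j, (if G.Adj i j then c i j else 0) * (x i * (x i - x j)) := by
    simp only [dotProduct, lap_mulVec, Finset.mul_sum]
    congr 1; ext i; congr 1; ext j; ring
  have h2 : x ⬝ᵥ (lapMatrix G c *ᵥ x) =
      ∑ i, ∑ j, (if G.Adj i j then c i j else 0) * (- (x j * (x i - x j))) := by
    rw [h1, Finset.sum_comm]
    congr 1; ext i; congr 1; ext j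
    have hadj : (if G.Adj j i then c j i else 0) = (if G.Adj i j then c i j else 0) := by
      by_cases h : G.Adj i j
      · rw [if_pos h, if_pos (G.adj_symm h), hsymm]
      · rw [if_neg h, if_neg fun h' => h (G.adj_symm h')]
    rw [hadj]; ring
  calc x ⬝ᵥ (lapMatrix G c *ᵥ x) * 2
      = (∑ i, ∑ j, (if G.Adj i j then c i j else 0) * (x i * (x i - x j)))
        + ∑ i, ∑ j, (if G.Adj i j then c i j else 0) * (- (x j * (x i - x j))) := by
        rw [← h1, ← h2]; ring
    _ = ∑ i, ∑ j, (if G.Adj i j then c i j else 0) * (x i - x j) ^ 2 := by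
        rw [← Finset.sum_add_distrib]
        congr 1; ext i
        rw [← Finset.sum_add_distrib]
        congr 1; ext j; ring

lemma lap_quad_nonneg (hsymm : ∀ i j, c i j = c j i)
    (hpos : ∀ i j, G.Adj i j → 0 < c i j) (x : V → ℝ) :
    0 ≤ x ⬝ᵥ (lapMatrix G c *ᵥ x) := by
  have h : 0 ≤ x ⬝ᵥ (lapMatrix G c *ᵥ x) * 2 := by
    rw [lap_quad G c hsymm x]
    apply Finset.sum_nonneg; intro i _
    apply Finset.sum_nonneg; intro j _
    apply mul_nonneg
    · by_cases h : G.Adj i j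
      · rw [if_pos h]; exact (hpos i j h).le
      · rw [if_neg h]
    · positivity
  linarith

lemma lap_quad_zero (hsymm : ∀ i j, c i j = c j i)
    (hpos : ∀ i j, G.Adj i j → 0 < c i j) (hconn : G.Connected) (x : V → ℝ)
    (hx : x ⬝ᵥ (lapMatrix G c *ᵥ x) = 0) : ∀ i j, x i = x j := by
  have hsum : ∑ i, ∑ j, (if G.Adj i j then c i j else 0) * (x i - x j) ^ 2 = 0 := by
    rw [← lap_quad G c hsymm x, hx]; ring
  have hterm : ∀ i j, G.Adj i j → x i = x j := by
    intro i j hadj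
    have hnn : ∀ i ∈ Finset.univ, ∀ j ∈ Finset.univ,
        (0:ℝ) ≤ (if G.Adj i j then c i j else 0) * (x i - x j) ^ 2 := by
      intro i _ j _
      apply mul_nonneg
      · by_cases h : G.Adj i j
        · rw [if_pos h]; exact (hpos i j h).le
        · rw [if_neg h]
      · positivity
    have h0 : (if G.Adj i j then c i j else 0) * (x i - x j) ^ 2 = 0 := by
      have hin := (Finset.sum_eq_zero_iff_of_nonneg
        (fun i _ => Finset.sum_nonneg (fun j hj => hnn i (Finset.mem_univ i) j hj))).mp
        hsum i (Finset.mem_univ i)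
      exact (Finset.sum_eq_zero_iff_of_nonneg (hnn i (Finset.mem_univ i))).mp hin j
        (Finset.mem_univ j)
    rw [if_pos hadj] at h0
    have := (hpos i j hadj).ne'
    have h1 : (x i - x j) ^ 2 = 0 := by
      rcases mul_eq_zero.mp h0 with h | h
      · exact absurd h this
      · exact h
    have := pow_eq_zero_iff (n := 2) (by norm_num) |>.mp h1
    linarith
  intro i j
  obtain ⟨p⟩ := hconn i j
  induction p with
  | nil => rfl
  | cons h p ih => exact (hterm _ _ h).trans ih

lemma lap_const (x : V → ℝ) (hx : ∀ i j, x i = x j) :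
    lapMatrix G c *ᵥ x = 0 := by
  ext i
  rw [lap_mulVec]
  apply Finset.sum_eq_zero
  intro j _
  rw [hx i j]; ring

end

section
variable [Fintype V]

lemma mp_unique (Q B C : Matrix V V ℝ) (hB : IsMoorePenroseInv Q B)
    (hC : IsMoorePenroseInv Q C) : B = C := by
  obtain ⟨hB1, hB2, hB3, hB4⟩ := hB
  obtain ⟨hC1, hC2, hC3, hC4⟩ := hC
  have hQB : Q * B = Q * C := by
    calc Q * B = (Q * C * Q) * B := by rw [hC1]
      _ = (Q * C) * (Q * B) := by rw [mul_assoc]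
      _ = (Q * C)ᵀ * (Q * B)ᵀ := by rw [hC3, hB3]
      _ = Cᵀ * (Q * B * Q)ᵀ := by
          simp only [transpose_mul, mul_assoc]
      _ = Cᵀ * Qᵀ := by rw [hB1]
      _ = (Q * C)ᵀ := by rw [transpose_mul]
      _ = Q * C := hC3
  have hBQ : B * Q = C * Q := by
    calc B * Q = B * (Q * C * Q) := by rw [hC1]
      _ = (B * Q) * (C * Q) := by simp only [mul_assoc]
      _ = (B * Q)ᵀ * (C * Q)ᵀ := by rw [hB4, hC4]
      _ = (Q * B * Q)ᵀ * Cᵀ := by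
          simp only [transpose_mul, mul_assoc]
      _ = Qᵀ * Cᵀ := by rw [hB1]
      _ = (C * Q)ᵀ := by rw [transpose_mul]
      _ = C * Q := hC4
  calc B = B * Q * B := hB2.symm
    _ = B * (Q * C) := by rw [mul_assoc, hQB]
    _ = (C * Q) * C := by rw [← mul_assoc, hBQ]
    _ = C := hC2

lemma mp_symm (Q Qd : Matrix V V ℝ) (hQ : Qᵀ = Q)
    (h : IsMoorePenroseInv Q Qd) : Qdᵀ = Qd := by
  obtain ⟨h1, h2, h3, h4⟩ := h
  have e1 : Q * Qdᵀ = Qd * Q := by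
    calc Q * Qdᵀ = Qᵀ * Qdᵀ := by rw [hQ]
      _ = (Qd * Q)ᵀ := by rw [transpose_mul]
      _ = Qd * Q := h4
  have e2 : Qdᵀ * Q = Q * Qd := by
    calc Qdᵀ * Q = Qdᵀ * Qᵀ := by rw [hQ]
      _ = (Q * Qd)ᵀ := by rw [transpose_mul]
      _ = Q * Qd := h3
  have hC : IsMoorePenroseInv Q Qdᵀ := by
    refine ⟨?_, ?_, ?_, ?_⟩
    · calc Q * Qdᵀ * Q = (Qᵀ * Qdᵀ) * Qᵀ := by rw [hQ]
        _ = (Q * Qd * Q)ᵀ := by rw [transpose_mul, transpose_mul]; rw [mul_assoc]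
        _ = Qᵀ := by rw [h1]
        _ = Q := hQ
    · calc Qdᵀ * Q * Qdᵀ = Qdᵀ * Qᵀ * Qdᵀ := by rw [hQ]
        _ = (Qd * Q * Qd)ᵀ := by rw [transpose_mul, transpose_mul]; rw [mul_assoc]
        _ = Qdᵀ := by rw [h2]
    · rw [e1]; rw [← e1]
      calc (Q * Qdᵀ)ᵀ = (Qd * Q)ᵀ := by rw [e1]
        _ = Qd * Q := h4
        _ = Q * Qdᵀ := e1.symm
    · calc (Qdᵀ * Q)ᵀ = (Q * Qd)ᵀ := by rw [e2]
        _ = Q * Qd := h3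
        _ = Qdᵀ * Q := e2.symm
  exact (mp_unique Q Qd Qdᵀ ⟨h1, h2, h3, h4⟩ hC).symm

end

section
variable [Fintype V] [DecidableEq V]

-- P u = u for u summing to zero
lemma proj_eq (G : SimpleGraph V) [DecidableRel G.Adj] (c : V → V → ℝ)
    (hsymm : ∀ i j, c i j = c j i) (hpos : ∀ i j, G.Adj i j → 0 < c i j)
    (hconn : G.Connected) (Qd : Matrix V V ℝ)
    (hQd : IsMoorePenroseInv (lapMatrix G c) Qd) (u : V → ℝ)
    (hu : ∑ i, u i = 0) :
    lapMatrix G c *ᵥ (Qd *ᵥ u) = u := by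
  set Q := lapMatrix G c with hQdef
  obtain ⟨h1, h2, h3, h4⟩ := hQd
  have hQsym : Qᵀ = Q := lap_symm_entry G c hsymm
  have hQQ : Q * (Q * Qd) = Q := by
    have h := congrArg Matrix.transpose h1
    rw [transpose_mul, h3, hQsym] at h
    exact h
  set w : V → ℝ := u - Q *ᵥ (Qd *ᵥ u) with hw
  have hQw : Q *ᵥ w = 0 := by
    have heq : Q *ᵥ (Q *ᵥ (Qd *ᵥ u)) = Q *ᵥ u := by
      rw [mulVec_mulVec, mulVec_mulVec, mul_assoc, hQQ]
    rw [hw, mulVec_sub, heq, sub_self]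
  have hwconst : ∀ i j, w i = w j := by
    apply lap_quad_zero G c hsymm hpos hconn
    rw [hQw, dotProduct_zero]
  have hwPu : w ⬝ᵥ (Q *ᵥ (Qd *ᵥ u)) = 0 := by
    rw [dotProduct_mulVec, ← mulVec_transpose, hQsym, hQw, zero_dotProduct]
  have hwu : w ⬝ᵥ u = 0 := by
    obtain ⟨i0⟩ := hconn.nonempty
    have heq : w ⬝ᵥ u = ∑ i, w i0 * u i := by
      simp only [dotProduct]
      exact Finset.sum_congr rfl fun i _ => by rw [hwconst i0 i]
    rw [heq, ← Finset.mul_sum, hu, mul_zero]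
  have hww : w ⬝ᵥ w = 0 := by
    have heq : w ⬝ᵥ w = w ⬝ᵥ u - w ⬝ᵥ (Q *ᵥ (Qd *ᵥ u)) := by
      rw [hw]
      simp [dotProduct_sub]
    rw [heq, hwu, hwPu, sub_zero]
  have hw0 : w = 0 := by
    ext i
    have hnn : ∀ j ∈ Finset.univ, (0:ℝ) ≤ w j * w j := fun j _ => mul_self_nonneg _
    have h := (Finset.sum_eq_zero_iff_of_nonneg hnn).mp hww i (Finset.mem_univ i)
    have := mul_self_eq_zero.mp h
    simpa using this
  have := sub_eq_zero.mp (hw ▸ hw0 : u - Q *ᵥ (Qd *ᵥ u) = 0)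
  exact this.symm

end

section
variable [Fintype V] [DecidableEq V]

lemma max_principle (G : SimpleGraph V) [DecidableRel G.Adj] (c : V → V → ℝ)
    (hpos : ∀ i j, G.Adj i j → 0 < c i j) (hconn : G.Connected)
    (v : V → ℝ) (a b : V) (hab : a ≠ b)
    (hv : lapMatrix G c *ᵥ v = Pi.single a 1 - Pi.single b 1) :
    ∀ m, v m ≤ v a := by
  have : Nonempty V := hconn.nonempty
  obtain ⟨m0, hm0⟩ := Finite.exists_max v
  set M := v m0 with hM
  have hprop : ∀ m, v m = M → m ≠ a → ∀ j, G.Adj m j → v j = M := by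
    intro m hm hma j hadj
    have hle : (lapMatrix G c *ᵥ v) m ≤ 0 := by
      rw [hv]
      simp only [Pi.sub_apply, Pi.single_apply]
      rw [if_neg hma]
      split_ifs <;> norm_num
    have hsum : ∑ j, (if G.Adj m j then c m j else 0) * (v m - v j) ≤ 0 := by
      rw [← lap_mulVec]; exact hle
    have hnn : ∀ j ∈ Finset.univ, (0:ℝ) ≤ (if G.Adj m j then c m j else 0) * (v m - v j) := by
      intro j _
      apply mul_nonneg
      · by_cases h : G.Adj m j
        · rw [if_pos h]; exact (hpos m j h).le
        · rw [if_neg h]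
      · rw [hm]; linarith [hm0 j]
    have hzero : ∑ j, (if G.Adj m j then c m j else 0) * (v m - v j) = 0 :=
      le_antisymm hsum (Finset.sum_nonneg hnn)
    have hterm := (Finset.sum_eq_zero_iff_of_nonneg hnn).mp hzero j (Finset.mem_univ j)
    rw [if_pos hadj] at hterm
    rcases mul_eq_zero.mp hterm with h | h
    · exact absurd h (hpos m j hadj).ne'
    · rw [hm] at h; linarith
  have key : ∀ (x y : V) (_ : G.Walk x y), v x = M → v a = M ∨ v y = M := by
    intro x y p
    induction p with
    | nil => exact fun h => Or.inr h
    | @cons x z y hadj p ih =>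
        intro hx
        by_cases hxa : x = a
        · exact Or.inl (hxa ▸ hx)
        · exact ih (hprop x hx hxa z hadj)
  obtain ⟨p⟩ := hconn m0 a
  have hva : v a = M := by
    rcases key m0 a p rfl with h | h <;> exact h
  intro m
  rw [hva]
  exact hm0 m

end

section
variable [Fintype V] [DecidableEq V]

lemma udot (a b : V) (x : V → ℝ) :
    (Pi.single a 1 - Pi.single b 1 : V → ℝ) ⬝ᵥ x = x a - x b := by
  simp [sub_dotProduct, single_dotProduct]

lemma usum (a b : V) : ∑ m, (Pi.single a 1 - Pi.single b 1 : V → ℝ) m = 0 := by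
  simp [Finset.sum_sub_distrib, Finset.sum_pi_single]

theorem effective_resistance_is_metric_aux
    (G : SimpleGraph V) [DecidableRel G.Adj]
    (c : V → V → ℝ) (hsymm : ∀ i j, c i j = c j i)
    (hpos : ∀ i j, G.Adj i j → 0 < c i j)
    (hconn : G.Connected)
    (Qd : Matrix V V ℝ) (hQd : IsMoorePenroseInv (lapMatrix G c) Qd) :
    ∀ i j k : V,
      0 ≤ effRes Qd i j ∧
      (effRes Qd i j = 0 ↔ i = j) ∧
      effRes Qd i j = effRes Qd j i ∧
      effRes Qd i k ≤ effRes Qd i j + effRes Qd j k := by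
  have hQsym : (lapMatrix G c)ᵀ = lapMatrix G c := lap_symm_entry G c hsymm
  have hQdsym : Qdᵀ = Qd := mp_symm _ Qd hQsym hQd
  obtain ⟨h1, h2, h3, h4⟩ := hQd
  set Q := lapMatrix G c with hQdef
  -- swap lemma using symmetry of Qd
  have sdot : ∀ x y : V → ℝ, x ⬝ᵥ (Qd *ᵥ y) = y ⬝ᵥ (Qd *ᵥ x) := by
    intro x y
    rw [dotProduct_mulVec, ← mulVec_transpose, hQdsym, dotProduct_comm]
  have heff : ∀ a b : V, effRes Qd a b =
      (Pi.single a 1 - Pi.single b 1 : V → ℝ) ⬝ᵥ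
        Qd *ᵥ (Pi.single a 1 - Pi.single b 1 : V → ℝ) := by
    intro a b
    unfold effRes
    congr!
  -- effRes as quadratic form in Q
  have hquad : ∀ a b : V, effRes Qd a b =
      (Qd *ᵥ (Pi.single a 1 - Pi.single b 1)) ⬝ᵥ
        (Q *ᵥ (Qd *ᵥ (Pi.single a 1 - Pi.single b 1))) := by
    intro a b
    set u : V → ℝ := Pi.single a 1 - Pi.single b 1 with hu
    calc effRes Qd a b = u ⬝ᵥ (Qd *ᵥ u) := heff a b
      _ = u ⬝ᵥ ((Qd * Q * Qd) *ᵥ u) := by rw [h2]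
      _ = u ⬝ᵥ (Qd *ᵥ (Q *ᵥ (Qd *ᵥ u))) := by simp only [← mulVec_mulVec]
      _ = (Q *ᵥ (Qd *ᵥ u)) ⬝ᵥ (Qd *ᵥ u) := sdot _ _
      _ = (Qd *ᵥ u) ⬝ᵥ (Q *ᵥ (Qd *ᵥ u)) := dotProduct_comm _ _
  have hnonneg : ∀ a b : V, 0 ≤ effRes Qd a b := by
    intro a b
    rw [hquad a b]
    exact lap_quad_nonneg G c hsymm hpos _
  have hzero : ∀ a b : V, effRes Qd a b = 0 ↔ a = b := by
    intro a b
    constructor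
    · intro h0
      set u : V → ℝ := Pi.single a 1 - Pi.single b 1 with hu
      have hy : ∀ m m', (Qd *ᵥ u) m = (Qd *ᵥ u) m' := by
        apply lap_quad_zero G c hsymm hpos hconn
        rw [← hquad a b, h0]
      have hQy : Q *ᵥ (Qd *ᵥ u) = 0 := lap_const G c _ hy
      have hproj : Q *ᵥ (Qd *ᵥ u) = u :=
        proj_eq G c hsymm hpos hconn Qd ⟨h1, h2, h3, h4⟩ u (usum a b)
      have hu0 : u = 0 := by rw [← hproj, hQy]
      by_contra hab
      have : u a = 1 := by
        rw [hu]
        simp [Pi.single_apply, hab]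
      rw [hu0] at this
      simp at this
    · intro h
      subst h
      simp [effRes]
  refine fun i j k => ⟨hnonneg i j, hzero i j, ?_, ?_⟩
  · -- symmetry
    have hneg : (Pi.single j 1 - Pi.single i 1 : V → ℝ) =
        -(Pi.single i 1 - Pi.single j 1) := (neg_sub _ _).symm
    rw [heff i j, heff j i, hneg, mulVec_neg, dotProduct_neg, neg_dotProduct, neg_neg]
  · -- triangle inequality
    by_cases hij : i = j
    · subst hij
      rw [(hzero i i).mpr rfl, zero_add]
    by_cases hjk : j = k
    · subst hjk
      rw [(hzero j j).mpr rfl, add_zero]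
    set u1 : V → ℝ := Pi.single i 1 - Pi.single j 1 with hu1
    set u2 : V → ℝ := Pi.single j 1 - Pi.single k 1 with hu2
    set u3 : V → ℝ := Pi.single i 1 - Pi.single k 1 with hu3
    set p := Qd *ᵥ u1 with hp
    set q := Qd *ᵥ u2 with hq
    set v := Qd *ᵥ u3 with hv
    have hQp : Q *ᵥ p = u1 :=
      proj_eq G c hsymm hpos hconn Qd ⟨h1, h2, h3, h4⟩ u1 (usum i j)
    have hQq : Q *ᵥ q = u2 :=
      proj_eq G c hsymm hpos hconn Qd ⟨h1, h2, h3, h4⟩ u2 (usum j k)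
    have hp_max : ∀ m, p m ≤ p i := max_principle G c hpos hconn p i j hij hQp
    have hp_min : ∀ m, p j ≤ p m := by
      intro m
      have hQnp : Q *ᵥ (-p) = Pi.single j 1 - Pi.single i 1 := by
        rw [mulVec_neg, hQp, hu1, neg_sub]
      have := max_principle G c hpos hconn (-p) j i (Ne.symm hij) hQnp m
      simpa using this
    have hq_max : ∀ m, q m ≤ q j := max_principle G c hpos hconn q j k hjk hQq
    have e_ik : effRes Qd i k = v i - v k := by
      rw [heff i k, ← hu3, ← hv, udot]
    have e_ij : effRes Qd i j = p i - p j := by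
      rw [heff i j, ← hu1, ← hp, udot]
    have e_jk : effRes Qd j k = q j - q k := by
      rw [heff j k, ← hu2, ← hq, udot]
    have s1 : v i - v j = p i - p k := by
      have : u1 ⬝ᵥ (Qd *ᵥ u3) = u3 ⬝ᵥ (Qd *ᵥ u1) := sdot _ _
      rw [udot, udot] at this
      exact this
    have s2 : v j - v k = q i - q k := by
      have : u2 ⬝ᵥ (Qd *ᵥ u3) = u3 ⬝ᵥ (Qd *ᵥ u2) := sdot _ _
      rw [udot, udot] at this
      exact this
    have t1 : p i - p k ≤ p i - p j := by linarith [hp_min k]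
    have t2 : q i - q k ≤ q j - q k := by linarith [hq_max i]
    rw [e_ik, e_ij, e_jk]
    linarith

end

/- STATEMENT 0: For a connected weighted graph, the effective resistance defines a
metric on the node set. -/
theorem effective_resistance_is_metric
    [Fintype V] [DecidableEq V] (G : SimpleGraph V) [DecidableRel G.Adj]
    (c : V → V → ℝ) (hsymm : ∀ i j, c i j = c j i)
    (hpos : ∀ i j, G.Adj i j → 0 < c i j)
    (hconn : G.Connected)
    (Qd : Matrix V V ℝ) (hQd : IsMoorePenroseInv (lapMatrix G c) Qd) :
    ∀ i j k : V,
      0 ≤ effRes Qd i j ∧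
      (effRes Qd i j = 0 ↔ i = j) ∧
      effRes Qd i j = effRes Qd j i ∧
      effRes Qd i k ≤ effRes Qd i j + effRes Qd j k := by
  intro i j k
  exact effective_resistance_is_metric_aux G c hsymm hpos hconn Qd hQd i j k
end

section
/- For any link (i,j) of a weighted graph, the relative resistance satisfies 0 < c_ij·ω_ij ≤ 1, and c_ij·ω_ij = 1 holds if and only if (i,j) is a cut link. -/
open Matrix

variable {V : Type*}

/- A link is a cut link (bridge) if its removal increases the number of
connected components of the graph. -/
def IsCutLink (G : SimpleGraph V) (i j : V) : Prop :=
  G.Adj i j ∧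
    Nat.card G.ConnectedComponent <
      Nat.card (G.deleteEdges {s(i, j)}).ConnectedComponent

/- STATEMENT 2: for any link, `0 < c i j * ω i j ≤ 1`, with equality `= 1` if and
only if the link is a cut link. -/
open Classical in
lemma lapMatrix_mulVec_apply [Fintype V] (H : SimpleGraph V) (c : V → V → ℝ)
    (w : V → ℝ) (k : V) :
    (lapMatrix H c *ᵥ w) k = ∑ l, (if H.Adj k l then c k l * (w k - w l) else 0) := by
  classical
  have h1 : (lapMatrix H c *ᵥ w) k = ∑ l, lapMatrix H c k l * w l := rfl
  have h2 : ∀ l, lapMatrix H c k l * w l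
      = (if k = l then ∑ m, (if H.Adj k m then c k m * w k else 0) else 0)
        + (if H.Adj k l then -(c k l * w l) else 0) := by
    intro l
    by_cases hkl : k = l
    · subst hkl
      simp [lapMatrix, H.irrefl, Finset.sum_mul, ite_mul]
    · simp only [lapMatrix, Matrix.of_apply, hkl, if_false, if_neg hkl, zero_add]
      by_cases h : H.Adj k l <;> simp [h]
  rw [h1]
  simp_rw [h2]
  rw [Finset.sum_add_distrib, Finset.sum_ite_eq, if_pos (Finset.mem_univ k),
    ← Finset.sum_add_distrib]
  refine Finset.sum_congr rfl fun l _ => ?_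
  by_cases h : H.Adj k l <;> simp [h] <;> ring

open Classical in
lemma lapMatrix_bilin [Fintype V] (H : SimpleGraph V) (c : V → V → ℝ) (u w : V → ℝ) :
    u ⬝ᵥ lapMatrix H c *ᵥ w
      = ∑ k, ∑ l, (if H.Adj k l then c k l * (u k * (w k - w l)) else 0) := by
  classical
  simp only [dotProduct, lapMatrix_mulVec_apply, Finset.mul_sum]
  refine Finset.sum_congr rfl fun k _ => Finset.sum_congr rfl fun l _ => ?_
  by_cases h : H.Adj k l <;> simp [h] <;> ring

open Classical in
lemma lapMatrix_quad [Fintype V] (H : SimpleGraph V) (c : V → V → ℝ)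
    (hsymm : ∀ i j, c i j = c j i) (w : V → ℝ) :
    2 * (w ⬝ᵥ lapMatrix H c *ᵥ w)
      = ∑ k, ∑ l, (if H.Adj k l then c k l * (w k - w l) ^ 2 else 0) := by
  classical
  have h2 : w ⬝ᵥ lapMatrix H c *ᵥ w
      = ∑ k, ∑ l, (if H.Adj k l then c k l * (w l * (w l - w k)) else 0) := by
    rw [lapMatrix_bilin, Finset.sum_comm]
    refine Finset.sum_congr rfl fun k _ => Finset.sum_congr rfl fun l _ => ?_
    by_cases h : H.Adj k l
    · rw [if_pos h, if_pos h.symm, hsymm l k]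
    · rw [if_neg h, if_neg fun h' => h h'.symm]
  rw [two_mul]
  nth_rewrite 1 [lapMatrix_bilin]
  rw [h2]
  rw [← Finset.sum_add_distrib]
  refine Finset.sum_congr rfl fun k _ => ?_
  rw [← Finset.sum_add_distrib]
  refine Finset.sum_congr rfl fun l _ => ?_
  by_cases h : H.Adj k l <;> simp [h] <;> ring

open Classical in
lemma lapMatrix_quad_nonneg [Fintype V] (H : SimpleGraph V) (c : V → V → ℝ)
    (hsymm : ∀ i j, c i j = c j i) (hpos : ∀ k l, H.Adj k l → 0 < c k l) (w : V → ℝ) :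
    0 ≤ w ⬝ᵥ lapMatrix H c *ᵥ w := by
  classical
  have h := lapMatrix_quad H c hsymm w
  have hnn : (0:ℝ) ≤ ∑ k, ∑ l, (if H.Adj k l then c k l * (w k - w l) ^ 2 else 0) := by
    refine Finset.sum_nonneg fun k _ => Finset.sum_nonneg fun l _ => ?_
    by_cases hadj : H.Adj k l
    · rw [if_pos hadj]
      exact mul_nonneg (hpos k l hadj).le (sq_nonneg _)
    · rw [if_neg hadj]
  linarith

open Classical in
lemma lapMatrix_quad_eq_zero [Fintype V] (H : SimpleGraph V) (c : V → V → ℝ)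
    (hsymm : ∀ i j, c i j = c j i) (hpos : ∀ k l, H.Adj k l → 0 < c k l) (w : V → ℝ)
    (hq : w ⬝ᵥ lapMatrix H c *ᵥ w = 0) :
    ∀ k l, H.Adj k l → w k = w l := by
  classical
  intro k l hadj
  have h := lapMatrix_quad H c hsymm w
  rw [hq, mul_zero] at h
  have hterm : ∀ a b : V, (if H.Adj a b then c a b * (w a - w b) ^ 2 else 0) = 0 := by
    have hnn : ∀ a ∈ Finset.univ, (0:ℝ) ≤ ∑ b, (if H.Adj a b then c a b * (w a - w b) ^ 2 else 0) := by
      intro a _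
      refine Finset.sum_nonneg fun b _ => ?_
      by_cases hadj' : H.Adj a b
      · rw [if_pos hadj']; exact mul_nonneg (hpos a b hadj').le (sq_nonneg _)
      · rw [if_neg hadj']
    intro a b
    have h1 := (Finset.sum_eq_zero_iff_of_nonneg hnn).mp h.symm a (Finset.mem_univ a)
    have hnn2 : ∀ b ∈ Finset.univ, (0:ℝ) ≤ (if H.Adj a b then c a b * (w a - w b) ^ 2 else 0) := by
      intro b _
      by_cases hadj' : H.Adj a b
      · rw [if_pos hadj']; exact mul_nonneg (hpos a b hadj').le (sq_nonneg _)
      · rw [if_neg hadj']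
    exact (Finset.sum_eq_zero_iff_of_nonneg hnn2).mp h1 b (Finset.mem_univ b)
  have := hterm k l
  rw [if_pos hadj] at this
  have h2 : (w k - w l) ^ 2 = 0 := by
    rcases mul_eq_zero.mp this with h' | h'
    · exact absurd h' (ne_of_gt (hpos k l hadj))
    · exact h'
  have := pow_eq_zero_iff (n := 2) (by norm_num) |>.mp h2
  linarith [sub_eq_zero.mp this]

open Classical in
lemma lapMatrix_mulVec_eq_zero [Fintype V] (H : SimpleGraph V) (c : V → V → ℝ)
    (w : V → ℝ) (hconst : ∀ k l, H.Adj k l → w k = w l) :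
    lapMatrix H c *ᵥ w = 0 := by
  classical
  funext k
  rw [lapMatrix_mulVec_apply]
  simp only [Pi.zero_apply]
  refine Finset.sum_eq_zero fun l _ => ?_
  by_cases h : H.Adj k l
  · rw [if_pos h, hconst k l h, sub_self, mul_zero]
  · rw [if_neg h]

open Classical in
lemma lapMatrix_transpose [Fintype V] (H : SimpleGraph V) (c : V → V → ℝ)
    (hsymm : ∀ i j, c i j = c j i) :
    (lapMatrix H c)ᵀ = lapMatrix H c := by
  classical
  ext k l
  simp only [Matrix.transpose_apply, lapMatrix, Matrix.of_apply]
  by_cases h : k = l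
  · subst h; simp
  · rw [if_neg (fun h' => h h'.symm), if_neg h]
    by_cases hadj : H.Adj k l
    · rw [if_pos hadj.symm, if_pos hadj, hsymm l k]
    · rw [if_neg (fun h' => hadj h'.symm), if_neg hadj]

open Classical in
lemma lapMatrix_deleteEdge_bilin [Fintype V] (G : SimpleGraph V) (c : V → V → ℝ)
    (hsymm : ∀ i j, c i j = c j i) {i j : V} (hij : G.Adj i j) (u w : V → ℝ) :
    u ⬝ᵥ lapMatrix G c *ᵥ w
      = u ⬝ᵥ lapMatrix (G.deleteEdges {s(i, j)}) c *ᵥ w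
        + c i j * ((u i - u j) * (w i - w j)) := by
  classical
  have hne : i ≠ j := hij.ne
  rw [lapMatrix_bilin, lapMatrix_bilin]
  have key : ∀ k l : V, (if G.Adj k l then c k l * (u k * (w k - w l)) else 0)
      = (if (G.deleteEdges {s(i, j)}).Adj k l then c k l * (u k * (w k - w l)) else 0)
        + ((if k = i ∧ l = j then c k l * (u k * (w k - w l)) else 0)
          + (if k = j ∧ l = i then c k l * (u k * (w k - w l)) else 0)) := by
    intro k l
    by_cases hadj : G.Adj k l
    · by_cases he : s(k, l) = s(i, j)
      · rw [Sym2.eq_iff] at he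
        have hda : ¬ (G.deleteEdges {s(i, j)}).Adj k l := by
          rw [SimpleGraph.deleteEdges_adj]
          rintro ⟨-, hmem⟩
          exact hmem (Set.mem_singleton_iff.mpr (Sym2.eq_iff.mpr he))
        rcases he with ⟨h1, h2⟩ | ⟨h1, h2⟩
        · rw [if_pos hadj, if_neg hda, if_pos ⟨h1, h2⟩,
            if_neg (fun h => hne (h1.symm.trans h.1)), zero_add, add_zero]
        · rw [if_pos hadj, if_neg hda, if_neg (fun h => hne (h.1.symm.trans h1)),
            if_pos ⟨h1, h2⟩, zero_add, zero_add]
      · have hda : (G.deleteEdges {s(i, j)}).Adj k l := by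
          rw [SimpleGraph.deleteEdges_adj]
          exact ⟨hadj, by simpa using he⟩
        have h1 : ¬ (k = i ∧ l = j) := fun ⟨a, b⟩ => he (by rw [a, b])
        have h2 : ¬ (k = j ∧ l = i) := fun ⟨a, b⟩ => he (by rw [a, b, Sym2.eq_swap])
        rw [if_pos hadj, if_pos hda, if_neg h1, if_neg h2, add_zero, add_zero]
    · have hda : ¬ (G.deleteEdges {s(i, j)}).Adj k l := fun h => hadj h.1
      have h1 : ¬ (k = i ∧ l = j) := fun ⟨a, b⟩ => hadj (a ▸ b ▸ hij)
      have h2 : ¬ (k = j ∧ l = i) := fun ⟨a, b⟩ => hadj (a ▸ b ▸ hij.symm)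
      rw [if_neg hadj, if_neg hda, if_neg h1, if_neg h2, add_zero, add_zero]
  simp_rw [key, Finset.sum_add_distrib]
  congr 1
  · refine Finset.sum_congr rfl fun k _ => Finset.sum_congr rfl fun l _ => ?_
    by_cases h : (G.deleteEdges {s(i, j)}).Adj k l <;> simp [h]
  have s1 : ∑ k : V, ∑ l : V, (if k = i ∧ l = j then c k l * (u k * (w k - w l)) else 0)
      = c i j * (u i * (w i - w j)) := by
    simp [ite_and, Finset.sum_ite_eq']
  have s2 : ∑ k : V, ∑ l : V, (if k = j ∧ l = i then c k l * (u k * (w k - w l)) else 0)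
      = c j i * (u j * (w j - w i)) := by
    simp [ite_and, Finset.sum_ite_eq']
  rw [s1, s2, hsymm j i]
  ring

lemma reachable_const_of_adj_const {H : SimpleGraph V} {f : V → ℝ}
    (hconst : ∀ k l, H.Adj k l → f k = f l) {k l : V} (h : H.Reachable k l) :
    f k = f l := by
  obtain ⟨p⟩ := h
  induction p with
  | nil => rfl
  | cons hadj _ ih => exact (hconst _ _ hadj).trans ih

lemma reach_delete_of_reach (G : SimpleGraph V) {i j : V}
    (h : (G.deleteEdges {s(i, j)}).Reachable i j) {k l : V} (hkl : G.Reachable k l) :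
    (G.deleteEdges {s(i, j)}).Reachable k l := by
  obtain ⟨p⟩ := hkl
  induction p with
  | nil => exact SimpleGraph.Reachable.refl _
  | @cons a b d hadj p ih =>
    refine SimpleGraph.Reachable.trans ?_ ih
    by_cases he : s(a, b) = s(i, j)
    · rw [Sym2.eq_iff] at he
      rcases he with ⟨h1, h2⟩ | ⟨h1, h2⟩
      · rw [h1, h2]; exact h
      · rw [h1, h2]; exact h.symm
    · exact (SimpleGraph.deleteEdges_adj.mpr ⟨hadj, by simpa using he⟩).reachable

lemma isCutLink_iff_not_reachable [Fintype V] (G : SimpleGraph V) {i j : V}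
    (hij : G.Adj i j) :
    IsCutLink G i j ↔ ¬ (G.deleteEdges {s(i, j)}).Reachable i j := by
  classical
  set G' := G.deleteEdges {s(i, j)} with hG'
  let φ : G'.ConnectedComponent → G.ConnectedComponent :=
    SimpleGraph.ConnectedComponent.map
      (SimpleGraph.Hom.ofLE (G.deleteEdges_le _))
  have hsurj : Function.Surjective φ := by
    intro C
    refine C.ind fun v => ?_
    exact ⟨G'.connectedComponentMk v, rfl⟩
  constructor
  · rintro ⟨-, hlt⟩ hreach
    have hinj : Function.Injective φ := by
      intro C D h
      refine SimpleGraph.ConnectedComponent.ind₂ (fun a b h => ?_) C D h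
      have : G.Reachable a b := SimpleGraph.ConnectedComponent.exact h
      exact SimpleGraph.ConnectedComponent.sound (reach_delete_of_reach G hreach this)
    have := Nat.card_eq_of_bijective φ ⟨hinj, hsurj⟩
    rw [hG'] at this
    omega
  · intro hreach
    refine ⟨hij, ?_⟩
    have hninj : ¬ Function.Injective φ := by
      intro hinj
      have h1 : φ (G'.connectedComponentMk i) = φ (G'.connectedComponentMk j) :=
        SimpleGraph.ConnectedComponent.sound hij.reachable
      exact hreach (SimpleGraph.ConnectedComponent.exact (hinj h1))
    haveI : Fintype G.ConnectedComponent := Fintype.ofFinite _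
    haveI : Fintype G'.ConnectedComponent := Fintype.ofFinite _
    rw [Nat.card_eq_fintype_card, Nat.card_eq_fintype_card]
    exact Fintype.card_lt_of_surjective_not_injective φ hsurj hninj

theorem relative_resistance_bounds
    [Fintype V] [DecidableEq V] (G : SimpleGraph V) [DecidableRel G.Adj]
    (c : V → V → ℝ) (hsymm : ∀ i j, c i j = c j i)
    (hpos : ∀ i j, G.Adj i j → 0 < c i j)
    (Qd : Matrix V V ℝ) (hQd : IsMoorePenroseInv (lapMatrix G c) Qd)
    (i j : V) (hij : G.Adj i j) :
    0 < c i j * effRes Qd i j ∧ c i j * effRes Qd i j ≤ 1 ∧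
      (c i j * effRes Qd i j = 1 ↔ IsCutLink G i j) := by
  classical
  obtain ⟨hp1, hp2, hp3, hp4⟩ := hQd
  set Q := lapMatrix G c with hQdef
  set G' := G.deleteEdges {s(i, j)} with hG'
  set x : V → ℝ := Pi.single i 1 - Pi.single j 1 with hx
  set v : V → ℝ := Qd *ᵥ x with hv
  have hne : i ≠ j := hij.ne
  have heff : effRes Qd i j = x ⬝ᵥ v := by rw [hv, hx]; unfold effRes; congr!
  have hpos' : ∀ k l, G'.Adj k l → 0 < c k l := fun k l h => hpos k l h.1
  have hxdot : ∀ z : V → ℝ, x ⬝ᵥ z = z i - z j := by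
    intro z
    rw [hx, sub_dotProduct, single_dotProduct, single_dotProduct,
      one_mul, one_mul]
  have hdotx : ∀ z : V → ℝ, z ⬝ᵥ x = z i - z j := by
    intro z
    rw [hx, dotProduct_sub, dotProduct_single, dotProduct_single,
      mul_one, mul_one]
  have hQsymm : Qᵀ = Q := lapMatrix_transpose G c hsymm
  -- key: Q *ᵥ v = x
  have hQQQd : Q * (Q * Qd) = Q := by
    have h5 : (Q * (Q * Qd))ᵀ = Qᵀ := by
      rw [Matrix.transpose_mul, hp3, hQsymm, hp1]
    have := congrArg Matrix.transpose h5
    rwa [Matrix.transpose_transpose, Matrix.transpose_transpose] at this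
  have hQy : Q *ᵥ (x - Q *ᵥ v) = 0 := by
    rw [Matrix.mulVec_sub, hv, Matrix.mulVec_mulVec, Matrix.mulVec_mulVec,
      Matrix.mul_assoc, hQQQd, sub_self]
  set y : V → ℝ := x - Q *ᵥ v with hy
  have hyij : y i = y j := by
    have hq : y ⬝ᵥ Q *ᵥ y = 0 := by rw [hQy, dotProduct_zero]
    exact lapMatrix_quad_eq_zero G c hsymm hpos y hq i j hij
  have hxy : x ⬝ᵥ y = 0 := by rw [hxdot y, hyij, sub_self]
  have hQvy : (Q *ᵥ v) ⬝ᵥ y = 0 := by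
    rw [dotProduct_comm, Matrix.dotProduct_mulVec, ← Matrix.mulVec_transpose,
      hQsymm, hQy, zero_dotProduct]
  have hy0 : y = 0 := by
    have : y ⬝ᵥ y = 0 := by
      rw [hy]
      rw [sub_dotProduct]
      rw [← hy, hxy, hQvy, sub_self]
    exact (dotProduct_self_eq_zero).mp this
  have hQv : Q *ᵥ v = x := by
    have := hy0
    rw [hy, sub_eq_zero] at this
    exact this.symm
  set ω : ℝ := x ⬝ᵥ v with hω
  rw [heff]
  have homega_eq : v ⬝ᵥ Q *ᵥ v = ω := by rw [hQv, dotProduct_comm, hω]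
  have hvij : v i - v j = ω := by rw [hω, hxdot v]
  -- decomposition
  have hdec := lapMatrix_deleteEdge_bilin G c hsymm hij v v
  rw [homega_eq, ← hG', hvij] at hdec
  set S : ℝ := v ⬝ᵥ lapMatrix G' c *ᵥ v with hS
  have hS0 : 0 ≤ S := lapMatrix_quad_nonneg G' c hsymm hpos' v
  have hcij : 0 < c i j := hpos i j hij
  -- ω > 0
  have hω0 : 0 < ω := by
    rcases lt_or_ge 0 ω with h | h
    · exact h
    · exfalso
      have hωle : ω ≤ 0 := h
      have hωnn : 0 ≤ ω := by nlinarith [mul_nonneg hcij.le (mul_self_nonneg ω)]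
      have hωeq : ω = 0 := le_antisymm hωle hωnn
      have hq : v ⬝ᵥ Q *ᵥ v = 0 := by rw [homega_eq, hωeq]
      have hconst := lapMatrix_quad_eq_zero G c hsymm hpos v hq
      have : Q *ᵥ v = 0 := lapMatrix_mulVec_eq_zero G c v hconst
      rw [hQv] at this
      have hxi : x i = 1 := by
        rw [hx]
        simp [Pi.sub_apply, hne]
      rw [this] at hxi
      simp at hxi
  refine ⟨mul_pos hcij hω0, ?_, ?_⟩
  · nlinarith
  · rw [isCutLink_iff_not_reachable G hij, ← hG']
    constructor
    · intro heq hreach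
      have hSz : S = 0 := by nlinarith
      have hconst := lapMatrix_quad_eq_zero G' c hsymm hpos' v hSz
      have : v i = v j := reachable_const_of_adj_const hconst hreach
      rw [this, sub_self] at hvij
      exact absurd hvij.symm (ne_of_gt hω0)
    · intro hreach
      set w : V → ℝ := fun k => if G'.Reachable i k then 1 else 0 with hw
      have hconst : ∀ k l, G'.Adj k l → w k = w l := by
        intro k l hadj
        have hiff : G'.Reachable i k ↔ G'.Reachable i l :=
          ⟨fun h' => h'.trans hadj.reachable, fun h' => h'.trans hadj.symm.reachable⟩
        rw [hw]
        simp only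
        rw [if_congr hiff rfl rfl]
      have hLw : lapMatrix G' c *ᵥ w = 0 := lapMatrix_mulVec_eq_zero G' c w hconst
      have hwi : w i = 1 := by rw [hw]; simp [SimpleGraph.Reachable.refl]
      have hwj : w j = 0 := by rw [hw]; simp [hreach]
      have hdec2 := lapMatrix_deleteEdge_bilin G c hsymm hij w v
      rw [← hG'] at hdec2
      have hL : w ⬝ᵥ lapMatrix G' c *ᵥ v = 0 := by
        rw [Matrix.dotProduct_mulVec, ← Matrix.mulVec_transpose,
          lapMatrix_transpose G' c hsymm, hLw, zero_dotProduct]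
      have hLHS : w ⬝ᵥ Q *ᵥ v = 1 := by
        rw [hQv, hdotx w, hwi, hwj, sub_zero]
      rw [hLHS, hL, hwi, hwj, hvij, zero_add, sub_zero, one_mul] at hdec2
      exact hdec2.symm
end

section
/- Foster's theorem: for a weighted graph G on n nodes with β(G) connected components, the sum over all links of the relative resistances equals n − β(G), i.e., Σ_{(i,j)∈E} c_ij·ω_ij = n − β(G). -/
open Matrix

variable {V : Type*}

lemma effRes_symm [Fintype V] (Qd : Matrix V V ℝ) (i j : V) :
    effRes Qd i j = effRes Qd j i := by
  unfold effRes
  simp [Matrix.mulVec_sub]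
  ring

/- The relative resistance `c i j * ω i j` as a function on unordered links. -/
noncomputable def relResEdge [Fintype V] (c : V → V → ℝ) (hc : ∀ i j, c i j = c j i)
    (Qd : Matrix V V ℝ) : Sym2 V → ℝ :=
  Sym2.lift ⟨fun i j => c i j * effRes Qd i j, fun a b => by
    show c a b * effRes Qd a b = c b a * effRes Qd b a
    rw [hc a b, effRes_symm]⟩


section FosterAux

open Finset

lemma foster_lapMatrix_apply [Fintype V] [DecidableEq V] (G : SimpleGraph V) [DecidableRel G.Adj]
    (c : V → V → ℝ) (k i : V) :
    lapMatrix G c k i = (if k = i then ∑ m, (if G.Adj i m then c i m else 0) else 0)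
      + (if G.Adj k i then -c k i else 0) := by
  by_cases h : k = i
  · subst h
    have h1 : lapMatrix G c k k = ∑ m, (if G.Adj k m then c k m else 0) := by
      simp only [lapMatrix, Matrix.of_apply, if_pos rfl]
      refine Finset.sum_congr rfl fun m _ => ?_
      split_ifs <;> rfl
    rw [h1]
    simp [G.loopless.irrefl k]
  · have h1 : lapMatrix G c k i = if G.Adj k i then -c k i else 0 := by
      simp [lapMatrix, h]
    rw [h1, if_neg h, zero_add]

lemma foster_sum_adj_swap [Fintype V] (G : SimpleGraph V) [DecidableRel G.Adj] (g : V → V → ℝ) :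
    ∑ i, ∑ j, (if G.Adj i j then g i j else 0) = ∑ i, ∑ j, (if G.Adj i j then g j i else 0) := by
  rw [Finset.sum_comm]
  exact Finset.sum_congr rfl fun i _ => Finset.sum_congr rfl fun j _ =>
    if_congr (G.adj_comm j i) rfl rfl

lemma foster_effRes_eq [Fintype V] [DecidableEq V] (Qd : Matrix V V ℝ) (i j : V) :
    effRes Qd i j = Qd i i + Qd j j - Qd i j - Qd j i := by
  unfold effRes
  simp [Matrix.mulVec_sub, Matrix.mulVec_single, dotProduct_sub, sub_dotProduct,
    Pi.single_apply]
  ring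

lemma foster_sum_pairs_eq_two_mul_sum_edges [Fintype V] [DecidableEq V] (G : SimpleGraph V)
    [DecidableRel G.Adj] (f : Sym2 V → ℝ) :
    ∑ i, ∑ j, (if G.Adj i j then f s(i, j) else 0) = 2 * ∑ e ∈ G.edgeFinset, f e := by
  have h0 := Fintype.sum_prod_type (f := fun p : V × V => if G.Adj p.1 p.2 then f s(p.1, p.2) else 0)
  rw [← h0]
  have h1 : ∑ p : V × V, (if G.Adj p.1 p.2 then f s(p.1, p.2) else 0)
      = ∑ p ∈ univ.filter (fun p : V × V => G.Adj p.1 p.2), f s(p.1, p.2) := by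
    rw [sum_filter]
  rw [h1]
  rw [← Finset.sum_fiberwise_of_maps_to (g := fun p : V × V => s(p.1, p.2))
    (t := G.edgeFinset) (fun p hp => by
      simp only [mem_filter, mem_univ, true_and] at hp
      simpa using hp)]
  rw [Finset.mul_sum]
  refine Finset.sum_congr rfl fun e he => ?_
  induction e with
  | _ a b =>
    have hab : G.Adj a b := by simpa using he
    have hfilter : (univ.filter (fun p : V × V => G.Adj p.1 p.2)).filter
        (fun p => s(p.1, p.2) = s(a, b)) = {(a, b), (b, a)} := by
      ext ⟨x, y⟩
      simp only [mem_filter, mem_univ, true_and, mem_insert, mem_singleton, Sym2.eq_iff,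
        Prod.mk.injEq]
      constructor
      · rintro ⟨-, (⟨rfl, rfl⟩ | ⟨rfl, rfl⟩)⟩ <;> simp
      · rintro (⟨rfl, rfl⟩ | ⟨rfl, rfl⟩) <;> simp [hab, hab.symm]
    rw [hfilter]
    rw [Finset.sum_insert (by simp [hab.ne]), Finset.sum_singleton]
    rw [Sym2.eq_swap (a := b)]
    ring

lemma foster_sum_pairs_eq_two_mul_trace [Fintype V] [DecidableEq V] (G : SimpleGraph V)
    [DecidableRel G.Adj] (c : V → V → ℝ) (hsymm : ∀ i j, c i j = c j i)
    (Qd : Matrix V V ℝ) :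
    ∑ i, ∑ j, (if G.Adj i j then c i j * effRes Qd i j else 0)
      = 2 * (Qd * lapMatrix G c).trace := by
  have htr : (Qd * lapMatrix G c).trace
      = ∑ i, ∑ j, (if G.Adj i j then c i j * (Qd i i - Qd i j) else 0) := by
    rw [Matrix.trace]
    simp only [Matrix.diag_apply, Matrix.mul_apply]
    refine Finset.sum_congr rfl fun i _ => ?_
    have hrhs : ∀ j, (if G.Adj i j then c i j * (Qd i i - Qd i j) else 0)
        = (if G.Adj i j then Qd i i * c i j else 0)
          + (if G.Adj i j then Qd i j * (-c i j) else 0) := by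
      intro j; split_ifs <;> ring
    simp_rw [hrhs, Finset.sum_add_distrib]
    simp_rw [foster_lapMatrix_apply, mul_add, Finset.sum_add_distrib]
    congr 1
    · simp only [mul_ite, mul_zero]
      rw [Finset.sum_ite_eq' univ i (fun k => Qd i k * ∑ m, (if G.Adj i m then c i m else 0))]
      simp only [mem_univ, if_true]
      rw [Finset.mul_sum]
      exact Finset.sum_congr rfl fun j _ => by split_ifs <;> ring
    · refine Finset.sum_congr rfl fun j _ => ?_
      rw [mul_ite, mul_zero, if_congr (G.adj_comm j i) rfl rfl]
      split_ifs with h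
      · rw [hsymm j i]
      · rfl
  rw [htr]
  simp_rw [foster_effRes_eq]
  have h1 := foster_sum_adj_swap G (fun i j => c i j * Qd j j)
  have h2 := foster_sum_adj_swap G (fun i j => c i j * Qd j i)
  have expand : ∀ i j, (if G.Adj i j then c i j * (Qd i i + Qd j j - Qd i j - Qd j i) else 0)
      = (if G.Adj i j then c i j * Qd i i else 0) + (if G.Adj i j then c i j * Qd j j else 0)
        - (if G.Adj i j then c i j * Qd i j else 0) - (if G.Adj i j then c i j * Qd j i else 0) := by
    intro i j; split_ifs <;> ring
  simp_rw [expand, Finset.sum_sub_distrib, Finset.sum_add_distrib]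
  rw [h1]
  conv_lhs => rw [h2]
  have e1 : ∀ i j, (if G.Adj i j then c j i * Qd i j else 0) = (if G.Adj i j then c i j * Qd i j else 0) := by
    intro i j; rw [hsymm j i]
  simp_rw [e1]
  have e2 : ∀ i j, (if G.Adj i j then c j i * Qd i i else 0) = (if G.Adj i j then c i j * Qd i i else 0) := by
    intro i j; rw [hsymm j i]
  simp_rw [e2]
  have mulsub : ∀ i j, (if G.Adj i j then c i j * (Qd i i - Qd i j) else 0)
      = (if G.Adj i j then c i j * Qd i i else 0) - (if G.Adj i j then c i j * Qd i j else 0) := by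
    intro i j; split_ifs <;> ring
  simp_rw [mulsub, Finset.sum_sub_distrib]
  ring

lemma foster_lap_mulVec [Fintype V] [DecidableEq V] (G : SimpleGraph V) [DecidableRel G.Adj]
    (c : V → V → ℝ) (x : V → ℝ) (i : V) :
    (lapMatrix G c *ᵥ x) i = ∑ j, (if G.Adj i j then c i j * (x i - x j) else 0) := by
  rw [Matrix.mulVec, dotProduct]
  simp_rw [foster_lapMatrix_apply, add_mul, Finset.sum_add_distrib]
  have h1 : ∑ j, (if i = j then ∑ m, (if G.Adj j m then c j m else 0) else 0) * x j
      = ∑ j, (if G.Adj i j then c i j * x i else 0) := by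
    simp only [ite_mul, zero_mul]
    rw [Finset.sum_ite_eq univ i (fun j => (∑ m, (if G.Adj j m then c j m else 0)) * x j)]
    simp only [mem_univ, if_true, Finset.sum_mul]
    refine Finset.sum_congr rfl fun j _ => ?_
    split_ifs <;> ring
  rw [h1]
  have h2 : ∀ j, (if G.Adj i j then -c i j else 0) * x j
      = -(if G.Adj i j then c i j * x j else 0) := by
    intro j; split_ifs <;> ring
  simp_rw [h2]
  rw [← Finset.sum_add_distrib]
  refine Finset.sum_congr rfl fun j _ => ?_
  split_ifs <;> ring

lemma foster_lap_mulVec_eq_zero_iff [Fintype V] [DecidableEq V] (G : SimpleGraph V)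
    [DecidableRel G.Adj] (c : V → V → ℝ) (hsymm : ∀ i j, c i j = c j i)
    (hpos : ∀ i j, G.Adj i j → 0 < c i j) (x : V → ℝ) :
    lapMatrix G c *ᵥ x = 0 ↔ ∀ i j, G.Adj i j → x i = x j := by
  constructor
  · intro h
    have hx : x ⬝ᵥ (lapMatrix G c *ᵥ x) = 0 := by rw [h]; simp
    have hexp : x ⬝ᵥ (lapMatrix G c *ᵥ x)
        = ∑ i, ∑ j, (if G.Adj i j then c i j * (x i * (x i - x j)) else 0) := by
      rw [dotProduct]
      simp_rw [foster_lap_mulVec, Finset.mul_sum]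
      refine Finset.sum_congr rfl fun i _ => Finset.sum_congr rfl fun j _ => ?_
      split_ifs <;> ring
    have hswap := foster_sum_adj_swap G (fun i j => c i j * (x i * (x i - x j)))
    have key : ∑ i, ∑ j, (if G.Adj i j then c i j * (x i - x j) ^ 2 else 0) = 0 := by
      have expand : ∀ i j, (if G.Adj i j then c i j * (x i - x j) ^ 2 else 0)
          = (if G.Adj i j then c i j * (x i * (x i - x j)) else 0)
            + (if G.Adj i j then c j i * (x j * (x j - x i)) else 0) := by
        intro i j
        split_ifs with hadj
        · rw [← hsymm i j]; ring
        · ring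
      simp_rw [expand, Finset.sum_add_distrib]
      rw [← hswap, ← hexp, hx, add_zero]
    intro i j hadj
    have hnn : ∀ a ∈ (univ : Finset V), ∀ b ∈ (univ : Finset V),
        (0:ℝ) ≤ if G.Adj a b then c a b * (x a - x b) ^ 2 else 0 := by
      intro a _ b _
      split_ifs with h'
      · exact mul_nonneg (hpos a b h').le (sq_nonneg _)
      · exact le_rfl
    have houter : ∀ a ∈ (univ : Finset V),
        (0:ℝ) ≤ ∑ b, (if G.Adj a b then c a b * (x a - x b) ^ 2 else 0) :=
      fun a ha => Finset.sum_nonneg (fun b hb => hnn a ha b hb)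
    have h1 := (Finset.sum_eq_zero_iff_of_nonneg houter).mp key i (mem_univ i)
    have h2 := (Finset.sum_eq_zero_iff_of_nonneg (fun b hb => hnn i (mem_univ i) b hb)).mp h1 j
      (mem_univ j)
    rw [if_pos hadj] at h2
    have hc := hpos i j hadj
    have hsq : (x i - x j) ^ 2 = 0 := by
      rcases mul_eq_zero.mp h2 with h' | h'
      · exact absurd h' hc.ne'
      · exact h'
    have hz : x i - x j = 0 := by
      by_contra hne
      exact hne (by nlinarith [sq_nonneg (x i - x j)])
    linarith
  · intro h
    ext i
    rw [foster_lap_mulVec]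
    refine Finset.sum_eq_zero fun j _ => ?_
    split_ifs with hadj
    · rw [h i j hadj, sub_self, mul_zero]
    · rfl

lemma foster_trace_eq [Fintype V] [DecidableEq V] (G : SimpleGraph V) [DecidableRel G.Adj]
    (Q Qd : Matrix V V ℝ)
    (h1 : Q * Qd * Q = Q) (h2 : Qd * Q * Qd = Qd)
    (hker : LinearMap.ker (Matrix.toLin' Q) = LinearMap.ker (Matrix.toLin' (G.lapMatrix ℝ))) :
    (Qd * Q).trace = (Fintype.card V : ℝ) - (Nat.card G.ConnectedComponent : ℝ) := by
  classical
  set f := Matrix.toLin' (Qd * Q) with hf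
  have hidem : (Qd * Q) * (Qd * Q) = Qd * Q := by
    calc (Qd * Q) * (Qd * Q) = (Qd * Q * Qd) * Q := by
          rw [Matrix.mul_assoc (Qd * Q) Qd Q]
    _ = Qd * Q := by rw [h2]
  have hproj : LinearMap.IsProj (LinearMap.range f) f := by
    refine ⟨fun x => LinearMap.mem_range_self f x, fun x hx => ?_⟩
    obtain ⟨y, rfl⟩ := hx
    rw [← LinearMap.comp_apply, hf, ← Matrix.toLin'_mul, hidem]
  have htrace : LinearMap.trace ℝ (V → ℝ) f = (Module.finrank ℝ (LinearMap.range f) : ℝ) :=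
    hproj.trace
  have htrmat : LinearMap.trace ℝ (V → ℝ) f = (Qd * Q).trace := by
    rw [hf, LinearMap.trace_eq_matrix_trace ℝ (Pi.basisFun ℝ V),
      LinearMap.toMatrix_eq_toMatrix', LinearMap.toMatrix'_toLin']
  have hkerf : LinearMap.ker f = LinearMap.ker (Matrix.toLin' Q) := by
    ext x
    simp only [LinearMap.mem_ker, hf, Matrix.toLin'_apply]
    constructor
    · intro hx
      have : Q *ᵥ x = (Q * (Qd * Q)) *ᵥ x := by
        rw [show Q * (Qd * Q) = Q by rw [← Matrix.mul_assoc, h1]]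
      rw [this, ← Matrix.mulVec_mulVec, hx, Matrix.mulVec_zero]
    · intro hx
      rw [← Matrix.mulVec_mulVec, hx, Matrix.mulVec_zero]
  have hrank : Module.finrank ℝ (LinearMap.range f) + Module.finrank ℝ (LinearMap.ker f)
      = Fintype.card V := by
    rw [LinearMap.finrank_range_add_finrank_ker f]
    simp [Module.finrank_pi]
  have hcomp : Module.finrank ℝ (LinearMap.ker f) = Nat.card G.ConnectedComponent := by
    rw [hkerf, hker, ← SimpleGraph.card_connectedComponent_eq_finrank_ker_toLin'_lapMatrix,
      Nat.card_eq_fintype_card]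
  rw [← htrmat, htrace]
  have hcast : (Module.finrank ℝ (LinearMap.range f) : ℝ)
      = (Fintype.card V : ℝ) - (Module.finrank ℝ (LinearMap.ker f) : ℝ) := by
    push_cast [← hrank]
    ring
  rw [hcast, hcomp]

end FosterAux

/- STATEMENT 3 (Foster's theorem): the sum of the relative resistances over all
links equals `n - β(G)`. -/
theorem foster_theorem
    [Fintype V] [DecidableEq V] (G : SimpleGraph V) [DecidableRel G.Adj]
    (c : V → V → ℝ) (hsymm : ∀ i j, c i j = c j i)
    (hpos : ∀ i j, G.Adj i j → 0 < c i j)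
    (Qd : Matrix V V ℝ) (hQd : IsMoorePenroseInv (lapMatrix G c) Qd) :
    ∑ e ∈ G.edgeFinset, relResEdge c hsymm Qd e =
      (Fintype.card V : ℝ) - (Nat.card G.ConnectedComponent : ℝ) := by
  have hedge := foster_sum_pairs_eq_two_mul_sum_edges G (relResEdge c hsymm Qd)
  have hmk : ∀ i j : V, relResEdge c hsymm Qd s(i, j) = c i j * effRes Qd i j := by
    intro i j; rfl
  simp_rw [hmk] at hedge
  have htr := foster_sum_pairs_eq_two_mul_trace G c hsymm Qd
  have hker : LinearMap.ker (Matrix.toLin' (lapMatrix G c))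
      = LinearMap.ker (Matrix.toLin' (G.lapMatrix ℝ)) := by
    ext x
    rw [LinearMap.mem_ker, LinearMap.mem_ker, Matrix.toLin'_apply,
      foster_lap_mulVec_eq_zero_iff G c hsymm hpos x,
      Matrix.toLin'_apply, ← SimpleGraph.lapMatrix_mulVec_eq_zero_iff_forall_adj]
  obtain ⟨h1, h2, h3, h4⟩ := hQd
  have hfinal := foster_trace_eq G (lapMatrix G c) Qd h1 h2 hker
  rw [← hfinal]
  linarith [hedge, htr]
end

section
/- For a connected weighted graph with Laplacian Q and resistance matrix Ω, and for every node i, the node resistance curvature satisfies p_i = lim_{t→0⁺} ( 1 − (1/(4t)) · ρ_{t,i}^T Ω ρ_{t,i} ), where ρ_{t,i} := exp(−Qt)·e_i is the heat-kernel distribution started at node i. -/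
open Matrix

variable {V : Type*}

/- The node resistance curvature `p i = 1 - (1/2) ∑_{j ∼ i} c i j * ω i j`. -/
open Classical in
noncomputable def nodeCurv [Fintype V] (G : SimpleGraph V) (c : V → V → ℝ)
    (Qd : Matrix V V ℝ) (i : V) : ℝ :=
  1 - 1 / 2 * ∑ j, if G.Adj i j then c i j * effRes Qd i j else 0

/- The resistance matrix `Ω` with entries `(Ω) i j = ω i j`. -/
noncomputable def resMatrix [Fintype V] (Qd : Matrix V V ℝ) : Matrix V V ℝ :=
  Matrix.of fun i j => effRes Qd i j

/-! The heat-kernel distribution `ρ_t = exp(-tQ) e_i` starts at `e_i`, and the resistance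
matrix has zero diagonal, so the quadratic form `ρ_tᵀ Ω ρ_t` vanishes at `t = 0`. Since `Ω` is
symmetric, its derivative there is `-2 (Q e_i)ᵀ Ω e_i = 2 ∑_{j ∼ i} c_ij ω_ij`, hence
`(1 / 4t) ρ_tᵀ Ω ρ_t → (1 / 2) ∑_{j ∼ i} c_ij ω_ij = 1 - p_i`. -/

theorem Matrix.IsSymm.dotProduct_mulVec_comm {n α : Type*} [Fintype n] [CommSemiring α]
    {A : Matrix n n α} (hA : A.IsSymm) (u v : n → α) :
    u ⬝ᵥ A *ᵥ v = v ⬝ᵥ A *ᵥ u := by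
  rw [dotProduct_mulVec, ← mulVec_transpose, hA.eq, dotProduct_comm]

section Derivatives

variable {n 𝕜 : Type*} [Fintype n] [RCLike 𝕜] {u v : 𝕜 → n → 𝕜} {u' v' : n → 𝕜} {x : 𝕜}

theorem HasDerivAt.dotProduct (hu : HasDerivAt u u' x) (hv : HasDerivAt v v' x) :
    HasDerivAt (fun t => u t ⬝ᵥ v t) (u' ⬝ᵥ v x + u x ⬝ᵥ v') x := by
  simp only [_root_.dotProduct, ← Finset.sum_add_distrib]
  exact HasDerivAt.fun_sum fun j _ => (hasDerivAt_pi.1 hu j).mul (hasDerivAt_pi.1 hv j)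

theorem HasDerivAt.const_mulVec (A : Matrix n n 𝕜) (hu : HasDerivAt u u' x) :
    HasDerivAt (fun t => A *ᵥ u t) (A *ᵥ u') x :=
  (Matrix.mulVecLin A).toContinuousLinearMap.hasFDerivAt.comp_hasDerivAt x hu

variable [DecidableEq n]

theorem Matrix.hasDerivAt_exp_smul_mulVec_zero (A : Matrix n n ℝ) (y : n → ℝ) :
    HasDerivAt (fun t : ℝ => NormedSpace.exp (t • A) *ᵥ y) (A *ᵥ y) 0 := by
  let _ : NormedRing (Matrix n n ℝ) := Matrix.linftyOpNormedRing
  let _ : NormedAlgebra ℝ (Matrix n n ℝ) := Matrix.linftyOpNormedAlgebra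
  have hexp := hasDerivAt_exp_smul_const (𝕂 := ℝ) A 0
  rw [zero_smul, NormedSpace.exp_zero, one_mul] at hexp
  let evalAt : Matrix n n ℝ →L[ℝ] n → ℝ :=
    ((LinearMap.applyₗ y).comp Matrix.toLin'.toLinearMap).toContinuousLinearMap
  exact evalAt.hasFDerivAt.comp_hasDerivAt 0 hexp

theorem Matrix.hasDerivAt_exp_smul_quadForm_zero (A : Matrix n n ℝ) {Ω : Matrix n n ℝ}
    (hΩ : Ω.IsSymm) (y : n → ℝ) :
    HasDerivAt
      (fun t : ℝ => (NormedSpace.exp (t • A) *ᵥ y) ⬝ᵥ Ω *ᵥ (NormedSpace.exp (t • A) *ᵥ y))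
      (2 * ((A *ᵥ y) ⬝ᵥ Ω *ᵥ y)) 0 := by
  have hρ := hasDerivAt_exp_smul_mulVec_zero A y
  refine (hρ.dotProduct (hρ.const_mulVec Ω)).congr_deriv ?_
  rw [zero_smul, NormedSpace.exp_zero, one_mulVec, hΩ.dotProduct_mulVec_comm y]
  ring

end Derivatives

section Resistance

variable [Fintype V]

theorem effRes_self (Qd : Matrix V V ℝ) (i : V) : effRes Qd i i = 0 := by
  simp [effRes]

theorem effRes_comm (Qd : Matrix V V ℝ) (i j : V) : effRes Qd i j = effRes Qd j i := by
  rw [effRes, effRes, ← neg_sub, mulVec_neg, neg_dotProduct, dotProduct_neg, neg_neg]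

theorem resMatrix_isSymm (Qd : Matrix V V ℝ) : (resMatrix Qd).IsSymm :=
  Matrix.IsSymm.ext fun i j => effRes_comm Qd j i

open Classical in
theorem lapMatrix_apply_of_ne (G : SimpleGraph V) (c : V → V → ℝ) {i j : V} (h : i ≠ j) :
    lapMatrix G c i j = if G.Adj i j then -c i j else 0 := by
  simp [lapMatrix, h]

variable [DecidableEq V]

open Classical in
theorem lapMatrix_mulVec_single_dotProduct (G : SimpleGraph V) {c : V → V → ℝ}
    (hsymm : ∀ i j, c i j = c j i) {Ω : Matrix V V ℝ} {i : V} (hΩ : Ω i i = 0) :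
    (lapMatrix G c *ᵥ Pi.single i 1) ⬝ᵥ Ω *ᵥ Pi.single i 1 =
      -∑ j, if G.Adj i j then c i j * Ω j i else 0 := by
  simp only [mulVec_single_one, _root_.dotProduct, ← Finset.sum_neg_distrib]
  refine Finset.sum_congr rfl fun j _ => ?_
  rcases eq_or_ne j i with rfl | hji
  · simp [hΩ]
  · rw [col_apply, col_apply, lapMatrix_apply_of_ne G c hji, G.adj_comm, hsymm]
    split_ifs <;> ring

theorem lapMatrix_mulVec_single_dotProduct_resMatrix (G : SimpleGraph V) {c : V → V → ℝ}
    (hsymm : ∀ i j, c i j = c j i) (Qd : Matrix V V ℝ) (i : V) :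
    (lapMatrix G c *ᵥ Pi.single i 1) ⬝ᵥ resMatrix Qd *ᵥ Pi.single i 1 =
      2 * (nodeCurv G c Qd i - 1) := by
  rw [lapMatrix_mulVec_single_dotProduct G hsymm (Ω := resMatrix Qd) (effRes_self Qd i),
    nodeCurv]
  simp only [resMatrix, of_apply, effRes_comm Qd _ i]
  ring

end Resistance

theorem nodeCurv_eq_limit_average_distance_general
    [Fintype V] [DecidableEq V] (G : SimpleGraph V)
    (c : V → V → ℝ) (hsymm : ∀ i j, c i j = c j i)
    (Qd : Matrix V V ℝ)
    (i : V) :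
    Filter.Tendsto
      (fun t : ℝ =>
        1 - 1 / (4 * t) *
          ((NormedSpace.exp (-(t • lapMatrix G c)) *ᵥ Pi.single i 1) ⬝ᵥ
            resMatrix Qd *ᵥ (NormedSpace.exp (-(t • lapMatrix G c)) *ᵥ Pi.single i 1)))
      (nhdsWithin 0 (Set.Ioi 0)) (nhds (nodeCurv G c Qd i)) := by
  have hF := (-lapMatrix G c).hasDerivAt_exp_smul_quadForm_zero (resMatrix_isSymm Qd)
    (Pi.single i 1)
  rw [neg_mulVec, neg_dotProduct, lapMatrix_mulVec_single_dotProduct_resMatrix G hsymm] at hF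
  have hF0 : (NormedSpace.exp ((0 : ℝ) • -lapMatrix G c) *ᵥ Pi.single i 1) ⬝ᵥ
      resMatrix Qd *ᵥ (NormedSpace.exp ((0 : ℝ) • -lapMatrix G c) *ᵥ Pi.single i 1) = 0 := by
    rw [zero_smul, NormedSpace.exp_zero, one_mulVec, single_one_dotProduct, mulVec_single_one]
    exact effRes_self Qd i
  convert (hF.tendsto_slope_zero_right.const_mul (1 / 4)).const_sub 1 using 2
  · rw [zero_add, hF0, sub_zero, smul_eq_mul, smul_neg]
    ring
  · ring

theorem nodeCurv_eq_limit_average_distance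
    [Fintype V] [DecidableEq V] (G : SimpleGraph V) [DecidableRel G.Adj]
    (c : V → V → ℝ) (hsymm : ∀ i j, c i j = c j i)
    (hpos : ∀ i j, G.Adj i j → 0 < c i j)
    (hconn : G.Connected)
    (Qd : Matrix V V ℝ) (hQd : IsMoorePenroseInv (lapMatrix G c) Qd)
    (i : V) :
    Filter.Tendsto
      (fun t : ℝ =>
        1 - 1 / (4 * t) *
          ((NormedSpace.exp (-(t • lapMatrix G c)) *ᵥ Pi.single i 1) ⬝ᵥ
            resMatrix Qd *ᵥ (NormedSpace.exp (-(t • lapMatrix G c)) *ᵥ Pi.single i 1)))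
      (nhdsWithin 0 (Set.Ioi 0)) (nhds (nodeCurv G c Qd i)) :=
  nodeCurv_eq_limit_average_distance_general G c hsymm Qd i
end
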